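/- arXiv:1212.2438 — 4 statements merged into one kernel-verified Lean document; each statement's English description precedes it below -/
import Mathlib

section
/- Let c be a positive integer and let L ∈ ℝ^{c×c} satisfy 𝟙_c^T L = 0 (all column sums of L are zero). Partition L in block form L = [[L11, L12],[L21, L22]] with L11 ∈ ℝ^{ĉ×ĉ}, L12 ∈ ℝ^{ĉ×(c−ĉ)}, L21 ∈ ℝ^{(c−ĉ)×ĉ}, L22 ∈ ℝ^{(c−ĉ)×(c−ĉ)}, where 0 < ĉ < c, and assume L22 is invertible. Then the Schur complement L̂ := L11 − L12 L22⁻¹ L21 satisfies 𝟙_ĉ^T L̂ = 0, i.e., all column sums of L̂ are zero. -/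
/-- Proposition 1, part 2: the Schur complement of a matrix with zero column
sums (a weighted Laplacian) again has zero column sums. -/
theorem schur_complement_zero_column_sums
    (c_hat d : ℕ) (hchat : 0 < c_hat) (hd : 0 < d)
    (L11 : Matrix (Fin c_hat) (Fin c_hat) ℝ) (L12 : Matrix (Fin c_hat) (Fin d) ℝ)
    (L21 : Matrix (Fin d) (Fin c_hat) ℝ) (L22 : Matrix (Fin d) (Fin d) ℝ)
    (hL22 : IsUnit L22.det)
    (hcolsum : ∀ j, ∑ i, (Matrix.fromBlocks L11 L12 L21 L22) i j = 0) :
    ∀ j, ∑ i, (L11 - L12 * L22⁻¹ * L21) i j = 0 := by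
  have h1 : ∀ j, ∑ i, L11 i j + ∑ i, L21 i j = 0 := by
    intro j
    have := hcolsum (Sum.inl j)
    simpa [Fintype.sum_sum_type, Matrix.fromBlocks] using this
  have h2 : ∀ k, ∑ i, L12 i k + ∑ i, L22 i k = 0 := by
    intro k
    have := hcolsum (Sum.inr k)
    simpa [Fintype.sum_sum_type, Matrix.fromBlocks] using this
  have hinv : L22 * L22⁻¹ = 1 := Matrix.mul_nonsing_inv _ hL22
  have key : ∀ l, ∑ i, (L12 * L22⁻¹) i l = -1 := by
    intro l
    have hone : ∑ i, (L22 * L22⁻¹) i l = 1 := by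
      rw [hinv]; simp [Matrix.one_apply, Finset.sum_ite_eq]
    calc ∑ i, (L12 * L22⁻¹) i l = ∑ i, ∑ k, L12 i k * L22⁻¹ k l := by
          simp [Matrix.mul_apply]
      _ = ∑ k, (∑ i, L12 i k) * L22⁻¹ k l := by
          rw [Finset.sum_comm]; simp [Finset.sum_mul]
      _ = ∑ k, (-∑ i, L22 i k) * L22⁻¹ k l := by
          apply Finset.sum_congr rfl; intro k _
          have h := h2 k
          have : ∑ i, L12 i k = -∑ i, L22 i k := by linarith
          rw [this]
      _ = -∑ k, ∑ i, L22 i k * L22⁻¹ k l := by simp [Finset.sum_mul]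
      _ = -∑ i, (L22 * L22⁻¹) i l := by rw [Finset.sum_comm]; simp [Matrix.mul_apply]
      _ = -1 := by rw [hone]
  intro j
  have : ∑ i, (L12 * L22⁻¹ * L21) i j = ∑ i, L11 i j := by
    calc ∑ i, (L12 * L22⁻¹ * L21) i j = ∑ i, ∑ l, (L12 * L22⁻¹) i l * L21 l j := by
          simp [Matrix.mul_apply]
      _ = ∑ l, (∑ i, (L12 * L22⁻¹) i l) * L21 l j := by
          rw [Finset.sum_comm]; simp [Finset.sum_mul]
      _ = ∑ l, (-1 : ℝ) * L21 l j := by simp only [key]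
      _ = -∑ l, L21 l j := by simp
      _ = ∑ i, L11 i j := by linarith [h1 j]
  simp only [Matrix.sub_apply, Finset.sum_sub_distrib]
  rw [this]; ring
end

section
/- Let A ∈ ℝ^{c×c} be entrywise nonnegative with zero diagonal, let Δ(A) be the diagonal matrix whose (ρ,ρ)-th entry is the sum of the entries of the ρ-th column of A, and let L := Δ(A) − A be the associated weighted (column) Laplacian. Partition L = [[L11, L12],[L21, L22]] with L11 ∈ ℝ^{ĉ×ĉ}, 0 < ĉ < c, and assume L22 is invertible with L22⁻¹ entrywise nonnegative. Then the Schur complement L̂ := L11 − L12 L22⁻¹ L21 has all off-diagonal entries nonpositive and all diagonal entries nonnegative. -/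
open Matrix Finset

private lemma mul_nonneg_of_np_np {x y : ℝ} (hx : x ≤ 0) (hy : y ≤ 0) : 0 ≤ x * y := by
  nlinarith

/-- Proposition 1, part 1: the Schur complement of a weighted (column)
Laplacian has nonpositive off-diagonal entries and nonnegative diagonal
entries. -/
theorem schur_complement_sign_pattern
    (c_hat d : ℕ) (hchat : 0 < c_hat) (hd : 0 < d)
    (A : Matrix (Fin c_hat ⊕ Fin d) (Fin c_hat ⊕ Fin d) ℝ)
    (hA : ∀ i j, 0 ≤ A i j) (hAdiag : ∀ i, A i i = 0)
    (L : Matrix (Fin c_hat ⊕ Fin d) (Fin c_hat ⊕ Fin d) ℝ)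
    (hL : L = Matrix.diagonal (fun ρ => ∑ i, A i ρ) - A)
    (hL22 : IsUnit (L.toBlocks₂₂).det)
    (hL22inv : ∀ i j, 0 ≤ (L.toBlocks₂₂)⁻¹ i j) :
    (∀ i j, i ≠ j →
      (L.toBlocks₁₁ - L.toBlocks₁₂ * (L.toBlocks₂₂)⁻¹ * L.toBlocks₂₁) i j ≤ 0) ∧
    (∀ i, 0 ≤ (L.toBlocks₁₁ - L.toBlocks₁₂ * (L.toBlocks₂₂)⁻¹ * L.toBlocks₂₁) i i) := by
  classical
  set B := (L.toBlocks₂₂)⁻¹ with hBdef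
  -- L has zero column sums
  have hcolL : ∀ ρ, ∑ i, L i ρ = 0 := by
    intro ρ
    simp only [hL, Matrix.sub_apply, Finset.sum_sub_distrib]
    rw [Finset.sum_congr rfl (fun i _ => Matrix.diagonal_apply (fun ρ => ∑ i, A i ρ) i ρ)]
    simp
  -- off-diagonal entries of L are nonpositive
  have hLnonpos : ∀ i j, i ≠ j → L i j ≤ 0 := by
    intro i j hij
    rw [hL]
    simp [Matrix.sub_apply, Matrix.diagonal_apply_ne _ hij, hA i j]
  -- block entries
  have h11 : ∀ i j, L.toBlocks₁₁ i j = L (Sum.inl i) (Sum.inl j) := fun _ _ => rfl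
  have h12 : ∀ i j, L.toBlocks₁₂ i j = L (Sum.inl i) (Sum.inr j) := fun _ _ => rfl
  have h21 : ∀ i j, L.toBlocks₂₁ i j = L (Sum.inr i) (Sum.inl j) := fun _ _ => rfl
  have h22 : ∀ i j, L.toBlocks₂₂ i j = L (Sum.inr i) (Sum.inr j) := fun _ _ => rfl
  have h12neg : ∀ i j, L.toBlocks₁₂ i j ≤ 0 := fun i j =>
    hLnonpos _ _ (by simp)
  have h21neg : ∀ i j, L.toBlocks₂₁ i j ≤ 0 := fun i j =>
    hLnonpos _ _ (by simp)
  -- the off-diagonal claim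
  have hoff : ∀ i j, i ≠ j →
      (L.toBlocks₁₁ - L.toBlocks₁₂ * B * L.toBlocks₂₁) i j ≤ 0 := by
    intro i j hij
    have h1 : L.toBlocks₁₁ i j ≤ 0 := hLnonpos _ _ (by simp [hij])
    have h2 : 0 ≤ (L.toBlocks₁₂ * B * L.toBlocks₂₁) i j := by
      rw [Matrix.mul_apply]
      refine Finset.sum_nonneg fun k _ => ?_
      refine mul_nonneg_of_np_np ?_ (h21neg k j)
      rw [Matrix.mul_apply]
      exact Finset.sum_nonpos fun m _ =>
        mul_nonpos_of_nonpos_of_nonneg (h12neg i m) (hL22inv m k)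
    simpa [Matrix.sub_apply] using sub_nonpos.2 (h1.trans h2)
  refine ⟨hoff, ?_⟩
  -- column sums of the Schur complement vanish
  have hB : L.toBlocks₂₂ * B = 1 := Matrix.mul_nonsing_inv _ hL22
  have hcolM : ∀ i, ∑ j, (L.toBlocks₁₁ - L.toBlocks₁₂ * B * L.toBlocks₂₁) j i = 0 := by
    intro i
    -- column sums of the blocks from hcolL
    have hA1 : ∑ j, L.toBlocks₁₁ j i = - ∑ k, L.toBlocks₂₁ k i := by
      have := hcolL (Sum.inl i)
      rw [Fintype.sum_sum_type] at this
      simp only [h11, h21]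
      linarith
    have hA2 : ∀ m, ∑ j, L.toBlocks₁₂ j m = - ∑ n, L.toBlocks₂₂ n m := by
      intro m
      have := hcolL (Sum.inr m)
      rw [Fintype.sum_sum_type] at this
      simp only [h12, h22]
      linarith
    -- column sums of L12 * B are all -1
    have hLB : ∀ k, ∑ j, (L.toBlocks₁₂ * B) j k = -1 := by
      intro k
      have : ∑ j, (L.toBlocks₁₂ * B) j k
          = ∑ m, (∑ j, L.toBlocks₁₂ j m) * B m k := by
        simp only [Matrix.mul_apply]
        rw [Finset.sum_comm]
        simp [Finset.sum_mul]
      rw [this]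
      have : ∑ m, (∑ j, L.toBlocks₁₂ j m) * B m k
          = - ∑ n, (L.toBlocks₂₂ * B) n k := by
        simp only [hA2, Matrix.mul_apply, neg_mul, Finset.sum_neg_distrib,
          Finset.sum_mul]
        rw [Finset.sum_comm]
      rw [this, hB]
      simp [Matrix.one_apply, Finset.sum_ite_eq']
    have hprod : ∑ j, (L.toBlocks₁₂ * B * L.toBlocks₂₁) j i
        = - ∑ k, L.toBlocks₂₁ k i := by
      have : ∑ j, (L.toBlocks₁₂ * B * L.toBlocks₂₁) j i
          = ∑ k, (∑ j, (L.toBlocks₁₂ * B) j k) * L.toBlocks₂₁ k i := by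
        simp only [Matrix.mul_apply]
        rw [Finset.sum_comm]
        simp [Finset.sum_mul]
      rw [this]
      simp [hLB]
    simp only [Matrix.sub_apply, Finset.sum_sub_distrib, hprod, hA1]
    ring
  -- conclude nonnegativity of the diagonal
  intro i
  have hsum := hcolM i
  have hsplit : ∑ j, (L.toBlocks₁₁ - L.toBlocks₁₂ * B * L.toBlocks₂₁) j i
      = (L.toBlocks₁₁ - L.toBlocks₁₂ * B * L.toBlocks₂₁) i i
        + ∑ j ∈ Finset.univ.erase i,
            (L.toBlocks₁₁ - L.toBlocks₁₂ * B * L.toBlocks₂₁) j i := by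
    rw [← Finset.add_sum_erase _ _ (Finset.mem_univ i)]
  have hrest : ∑ j ∈ Finset.univ.erase i,
      (L.toBlocks₁₁ - L.toBlocks₁₂ * B * L.toBlocks₂₁) j i ≤ 0 :=
    Finset.sum_nonpos fun j hj => hoff j i (Finset.ne_of_mem_erase hj)
  linarith [hsplit ▸ hsum]
end

section
/- Let A ∈ ℝ^{c×c} be entrywise nonnegative with zero diagonal, and assume A is irreducible in the sense that for all indices i ≠ j there exists n ≥ 1 with (A^n)_{ij} > 0. Let L := Δ(A) − A be the weighted (column) Laplacian, where Δ(A) is the diagonal matrix of column sums of A. Then for every nonempty proper subset V_r of the index set {1,…,c}, the principal submatrix L22 of L obtained by restricting rows and columns to V_r is invertible, and L22⁻¹ is entrywise nonnegative. -/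
open Matrix Finset

/-- Entries of powers of a nonnegative matrix are nonnegative. -/
lemma aux_pow_entry_nonneg {ι : Type*} [Fintype ι] [DecidableEq ι]
    (P : Matrix ι ι ℝ) (hP : ∀ i j, 0 ≤ P i j) :
    ∀ k i j, 0 ≤ (P ^ k) i j := by
  intro k
  induction k with
  | zero =>
    intro i j
    simp only [pow_zero, Matrix.one_apply]
    split <;> norm_num
  | succ k ih =>
    intro i j
    rw [pow_succ, Matrix.mul_apply]
    exact Finset.sum_nonneg fun w _ => mul_nonneg (ih i w) (hP w j)

/-- mulVec monotonicity for nonnegative matrices -/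
lemma aux_mulVec_mono {ι : Type*} [Fintype ι] [DecidableEq ι]
    (P : Matrix ι ι ℝ) (hP : ∀ i j, 0 ≤ P i j) (x y : ι → ℝ) (h : ∀ i, x i ≤ y i) :
    ∀ i, (P *ᵥ x) i ≤ (P *ᵥ y) i := by
  intro i
  simp only [Matrix.mulVec, dotProduct]
  exact Finset.sum_le_sum fun j _ => mul_le_mul_of_nonneg_left (h j) (hP i j)

/-- Key abstract lemma: if P is entrywise nonnegative and some power has all
row sums < 1, then 1 - P is invertible with entrywise nonnegative inverse. -/
lemma aux_key {ι : Type*} [Fintype ι] [DecidableEq ι] [Nonempty ι]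
    (P : Matrix ι ι ℝ) (hP : ∀ i j, 0 ≤ P i j)
    (m : ℕ) (hm : ∀ i, ∑ j, (P ^ m) i j < 1) :
    IsUnit (1 - P).det ∧ ∀ i j, 0 ≤ (1 - P)⁻¹ i j := by
  have hpow := aux_pow_entry_nonneg P hP
  -- if x ≤ y pointwise (x := P *ᵥ y ≤ y), then P^m *ᵥ y ≤ y
  have hdom : ∀ y : ι → ℝ, (∀ i, (P *ᵥ y) i ≤ y i) → ∀ i, ((P ^ m) *ᵥ y) i ≤ y i := by
    intro y hy
    have : ∀ k i, ((P ^ k) *ᵥ y) i ≤ y i := by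
      intro k
      induction k with
      | zero => intro i; simp [Matrix.one_mulVec]
      | succ k ih =>
        intro i
        have h1 : ((P ^ (k+1)) *ᵥ y) i = (P *ᵥ ((P ^ k) *ᵥ y)) i := by
          rw [pow_succ']
          rw [← Matrix.mulVec_mulVec]
        rw [h1]
        calc (P *ᵥ ((P ^ k) *ᵥ y)) i ≤ (P *ᵥ y) i :=
              aux_mulVec_mono P hP _ _ ih i
          _ ≤ y i := hy i
    exact this m
  have hdet : IsUnit (1 - P).det := by
    rw [isUnit_iff_ne_zero]
    intro h0
    obtain ⟨v, hv0, hv⟩ := (Matrix.exists_mulVec_eq_zero_iff).2 h0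
    have hfix : P *ᵥ v = v := by
      have := hv
      rw [Matrix.sub_mulVec, Matrix.one_mulVec, sub_eq_zero] at this
      exact this.symm
    have hfixk : ∀ k, (P ^ k) *ᵥ v = v := by
      intro k
      induction k with
      | zero => simp [Matrix.one_mulVec]
      | succ k ih => rw [pow_succ', ← Matrix.mulVec_mulVec, ih, hfix]
    obtain ⟨i0, _, hi0⟩ := Finset.exists_max_image Finset.univ (fun i => |v i|)
      ⟨Classical.arbitrary ι, Finset.mem_univ _⟩
    have ha : 0 < |v i0| := by
      obtain ⟨i, hi⟩ := Function.ne_iff.1 hv0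
      exact lt_of_lt_of_le (abs_pos.2 hi) (hi0 i (Finset.mem_univ i))
    have : |v i0| ≤ (∑ j, (P ^ m) i0 j) * |v i0| := by
      conv_lhs => rw [← hfixk m]
      calc |((P ^ m) *ᵥ v) i0| ≤ ∑ j, |(P ^ m) i0 j * v j| := by
            simp only [Matrix.mulVec, dotProduct]
            exact Finset.abs_sum_le_sum_abs _ _
        _ ≤ ∑ j, (P ^ m) i0 j * |v i0| := by
            apply Finset.sum_le_sum
            intro j _
            rw [abs_mul, abs_of_nonneg (hpow m i0 j)]
            exact mul_le_mul_of_nonneg_left (hi0 j (Finset.mem_univ j)) (hpow m i0 j)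
        _ = (∑ j, (P ^ m) i0 j) * |v i0| := by rw [Finset.sum_mul]
    nlinarith [hm i0]
  refine ⟨hdet, ?_⟩
  intro i j
  set y : ι → ℝ := fun i => (1 - P)⁻¹ i j with hy
  have hcol : (1 - P) *ᵥ y = fun i => (1 : Matrix ι ι ℝ) i j := by
    funext i
    have := Matrix.mul_nonsing_inv (1 - P) hdet
    have h2 : ((1 - P) * (1 - P)⁻¹) i j = (1 : Matrix ι ι ℝ) i j := by rw [this]
    rw [Matrix.mul_apply] at h2
    simpa [Matrix.mulVec, dotProduct, hy] using h2
  have hPy : ∀ i, (P *ᵥ y) i ≤ y i := by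
    intro i
    have h1 : y i - (P *ᵥ y) i = (1 : Matrix ι ι ℝ) i j := by
      have := congrFun hcol i
      rwa [Matrix.sub_mulVec, Matrix.one_mulVec] at this
    have h2 : (0:ℝ) ≤ (1 : Matrix ι ι ℝ) i j := by
      simp only [Matrix.one_apply]; split <;> norm_num
    linarith [h1 ▸ h2]
  have hRy := hdom y hPy
  obtain ⟨i1, _, hi1⟩ := Finset.exists_min_image Finset.univ y
    ⟨Classical.arbitrary ι, Finset.mem_univ _⟩
  by_contra hneg
  push_neg at hneg
  have hm1 : y i1 < 0 := lt_of_le_of_lt (hi1 i (Finset.mem_univ i)) hneg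
  have : y i1 ≥ (∑ u, (P ^ m) i1 u) * y i1 := by
    calc y i1 ≥ ((P ^ m) *ᵥ y) i1 := hRy i1
      _ = ∑ u, (P ^ m) i1 u * y u := by simp [Matrix.mulVec, dotProduct]
      _ ≥ ∑ u, (P ^ m) i1 u * y i1 := by
          apply Finset.sum_le_sum
          intro u _
          exact mul_le_mul_of_nonneg_left (hi1 u (Finset.mem_univ u)) (hpow m i1 u)
      _ = (∑ u, (P ^ m) i1 u) * y i1 := by rw [Finset.sum_mul]
  have hs := Finset.sum_nonneg (fun u (_ : u ∈ Finset.univ) => hpow m i1 u)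
  nlinarith [hm i1]

/-- If W is closed under in-edges, no power of A connects outside to W. -/
lemma aux_closed {c : ℕ} (A : Matrix (Fin c) (Fin c) ℝ) (hA : ∀ i j, 0 ≤ A i j)
    (W : Finset (Fin c)) (hcl : ∀ i j, j ∈ W → 0 < A i j → i ∈ W) :
    ∀ n i j, j ∈ W → i ∉ W → (A ^ (n + 1)) i j = 0 := by
  intro n
  induction n with
  | zero =>
    intro i j hj hi
    simp only [zero_add, pow_one]
    rcases lt_or_eq_of_le (hA i j) with h | h
    · exact absurd (hcl i j hj h) hi
    · exact h.symm
  | succ n ih =>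
    intro i j hj hi
    rw [pow_succ, Matrix.mul_apply]
    apply Finset.sum_eq_zero
    intro w _
    rcases lt_or_eq_of_le (hA w j) with h | h
    · rw [ih i w (hcl w j hj h) hi, zero_mul]
    · rw [← h, mul_zero]

open Matrix Finset

/-- Key auxiliary fact (Niezink, Thm 3.11): for an irreducible nonnegative
adjacency matrix, every proper principal submatrix of the weighted (column)
Laplacian is invertible with entrywise nonnegative inverse. -/
theorem laplacian_principal_submatrix_invertible
    (c : ℕ) (hc : 0 < c)
    (A : Matrix (Fin c) (Fin c) ℝ)
    (hA : ∀ i j, 0 ≤ A i j) (hAdiag : ∀ i, A i i = 0)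
    (hirr : ∀ i j : Fin c, i ≠ j → ∃ n : ℕ, 1 ≤ n ∧ 0 < (A ^ n) i j)
    (L : Matrix (Fin c) (Fin c) ℝ)
    (hL : L = Matrix.diagonal (fun ρ => ∑ i, A i ρ) - A)
    (Vr : Finset (Fin c)) (hne : Vr.Nonempty) (hproper : Vr ≠ Finset.univ) :
    IsUnit (L.submatrix (Subtype.val : Vr → Fin c) (Subtype.val : Vr → Fin c)).det ∧
    ∀ i j, 0 ≤ (L.submatrix (Subtype.val : Vr → Fin c) (Subtype.val : Vr → Fin c))⁻¹ i j := by
  classical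
  haveI : Nonempty {x // x ∈ Vr} := ⟨⟨hne.choose, hne.choose_spec⟩⟩
  obtain ⟨iout, hiout⟩ : ∃ i, i ∉ Vr := by
    by_contra h
    push_neg at h
    exact hproper (Finset.eq_univ_iff_forall.2 h)
  set dd : Fin c → ℝ := fun ρ => ∑ i, A i ρ with hdd
  have hdd0 : ∀ ρ, 0 ≤ dd ρ := fun ρ => Finset.sum_nonneg fun i _ => hA i ρ
  set s : ℝ := 1 + ∑ ρ, dd ρ with hs
  have hT0 : 0 ≤ ∑ ρ, dd ρ := Finset.sum_nonneg fun ρ _ => hdd0 ρ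
  have hs1 : (1:ℝ) ≤ s := by simp only [hs]; linarith
  have hs0 : (0:ℝ) < s := lt_of_lt_of_le one_pos hs1
  have hsne : s ≠ 0 := ne_of_gt hs0
  have hds : ∀ ρ, dd ρ < s := by
    intro ρ
    have : dd ρ ≤ ∑ ρ, dd ρ :=
      Finset.single_le_sum (fun i (_ : i ∈ Finset.univ) => hdd0 i) (Finset.mem_univ ρ)
    simp only [hs]; linarith
  set P : Matrix {x // x ∈ Vr} {x // x ∈ Vr} ℝ :=
    fun j u => ((if j = u then s - dd ↑j else 0) + A ↑u ↑j) / s with hPdef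
  have hP : ∀ j u, 0 ≤ P j u := by
    intro j u
    apply div_nonneg _ (le_of_lt hs0)
    have h1 : (0:ℝ) ≤ (if j = u then s - dd ↑j else 0) := by
      split
      · linarith [hds (↑j : Fin c)]
      · exact le_refl 0
    exact add_nonneg h1 (hA _ _)
  set M := L.submatrix (Subtype.val : Vr → Fin c) (Subtype.val : Vr → Fin c) with hM
  -- entrywise relation Mᵀ = s • (1 - P)
  have hMP : ∀ u j : {x // x ∈ Vr}, M u j = s * ((1 - P) j u) := by
    intro u j
    have hL' : M u j = (if (↑u : Fin c) = ↑j then dd ↑u else 0) - A ↑u ↑j := by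
      simp [hM, hL, Matrix.submatrix_apply, Matrix.sub_apply, Matrix.diagonal_apply, hdd]
    have hsP : s * P j u = (if j = u then s - dd ↑j else 0) + A ↑u ↑j := by
      rw [hPdef]
      field_simp
    have h1P : (1 - P) j u = (if j = u then (1:ℝ) else 0) - P j u := by
      simp [Matrix.sub_apply, Matrix.one_apply]
    rw [hL', h1P, mul_sub, hsP]
    by_cases h : j = u
    · subst h
      simp only [if_pos rfl, Subtype.coe_eta]
      ring_nf
      simp [hAdiag]
    · have h' : (↑u : Fin c) ≠ ↑j := fun he => h (Subtype.ext he.symm)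
      simp [h, h']
  -- row sums of P
  have hrowsum : ∀ j : {x // x ∈ Vr}, ∑ u, P j u = (s - ∑ i ∈ Vrᶜ, A i ↑j) / s := by
    intro j
    have hsplit : (∑ i ∈ Vr, A i ↑j) + ∑ i ∈ Vrᶜ, A i ↑j = dd ↑j := by
      rw [hdd]
      exact Finset.sum_add_sum_compl Vr _
    have hsub : ∑ u : {x // x ∈ Vr}, A ↑u ↑j = ∑ i ∈ Vr, A i ↑j := by
      rw [← Finset.sum_coe_sort Vr (fun i => A i ↑j)]
    calc ∑ u, P j u = (∑ u : {x // x ∈ Vr}, ((if j = u then s - dd ↑j else 0) + A ↑u ↑j)) / s := by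
          rw [hPdef, Finset.sum_div]
      _ = ((s - dd ↑j) + ∑ u : {x // x ∈ Vr}, A ↑u ↑j) / s := by
          rw [Finset.sum_add_distrib, Finset.sum_ite_eq Finset.univ j (fun _ => s - dd ↑j)]
          simp
      _ = (s - ∑ i ∈ Vrᶜ, A i ↑j) / s := by
          rw [hsub]
          congr 1
          linarith [hsplit]
  have hcompl_nonneg : ∀ j : {x // x ∈ Vr}, 0 ≤ ∑ i ∈ Vrᶜ, A i ↑j :=
    fun j => Finset.sum_nonneg fun i _ => hA i ↑j
  have hrow_le : ∀ j, ∑ u, P j u ≤ 1 := by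
    intro j
    rw [hrowsum j, div_le_one hs0]
    linarith [hcompl_nonneg j]
  -- row sums of powers
  set rs : ℕ → {x // x ∈ Vr} → ℝ := fun k j => ∑ u, (P ^ k) j u with hrs
  have hpow := aux_pow_entry_nonneg P hP
  have hrs0 : ∀ j, rs 0 j = 1 := by
    intro j
    simp [hrs, Matrix.one_apply]
  have hrec : ∀ k j, rs (k + 1) j = ∑ w, P j w * rs k w := by
    intro k j
    simp only [hrs]
    calc ∑ u, (P ^ (k+1)) j u = ∑ u, ∑ w, P j w * (P ^ k) w u := by
          apply Finset.sum_congr rfl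
          intro u _
          rw [pow_succ', Matrix.mul_apply]
      _ = ∑ w, ∑ u, P j w * (P ^ k) w u := Finset.sum_comm
      _ = ∑ w, P j w * ∑ u, (P ^ k) w u := by
          apply Finset.sum_congr rfl
          intro w _
          rw [Finset.mul_sum]
  have hrs_le1 : ∀ k j, rs k j ≤ 1 := by
    intro k
    induction k with
    | zero => intro j; rw [hrs0]
    | succ k ih =>
      intro j
      rw [hrec]
      calc ∑ w, P j w * rs k w ≤ ∑ w, P j w * 1 := by
            apply Finset.sum_le_sum
            intro w _
            exact mul_le_mul_of_nonneg_left (ih w) (hP j w)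
        _ = ∑ w, P j w := by simp
        _ ≤ 1 := hrow_le j
  have hrs_anti : ∀ k j, rs (k + 1) j ≤ rs k j := by
    intro k
    induction k with
    | zero =>
      intro j
      rw [hrs0]
      exact hrs_le1 1 j
    | succ k ih =>
      intro j
      rw [hrec, hrec]
      apply Finset.sum_le_sum
      intro w _
      exact mul_le_mul_of_nonneg_left (ih w) (hP j w)
  have hrs_mono : ∀ j k l, k ≤ l → rs l j ≤ rs k j := by
    intro j k l h
    induction l, h using Nat.le_induction with
    | base => exact le_refl _
    | succ l hkl ih => exact le_trans (hrs_anti l j) ih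
  -- the growing family of "leaky" states
  set S : ℕ → Finset {x // x ∈ Vr} :=
    fun k => Finset.filter (fun j => rs k j < 1) Finset.univ with hS
  have hSmem : ∀ k j, j ∈ S k ↔ rs k j < 1 := by
    intro k j
    simp [hS]
  have hSnotmem : ∀ k j, j ∉ S k → rs k j = 1 := by
    intro k j hj
    rw [hSmem] at hj
    push_neg at hj
    exact le_antisymm (hrs_le1 k j) hj
  have hSmono : ∀ k l, k ≤ l → S k ⊆ S l := by
    intro k l h j hj
    rw [hSmem] at hj ⊢
    exact lt_of_le_of_lt (hrs_mono j k l h) hj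
  have hgrow : ∀ k, S k ≠ Finset.univ → S k ⊂ S (k + 1) := by
    intro k hSk
    rw [Finset.ssubset_iff_of_subset (hSmono k (k+1) (Nat.le_succ k))]
    by_contra hno
    push_neg at hno
    -- then S (k+1) ⊆ S k; derive a contradiction with irreducibility
    have hSeq : ∀ j, j ∈ S (k+1) → j ∈ S k := fun j hj => hno j hj
    -- the "untouched" set U and its image W in Fin c
    obtain ⟨j0, hj0⟩ : ∃ j : {x // x ∈ Vr}, j ∉ S k := by
      by_contra h
      push_neg at h
      exact hSk (Finset.eq_univ_iff_forall.2 h)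
    set W : Finset (Fin c) := Finset.image Subtype.val (Finset.univ \ S k) with hW
    have hWVr : ∀ i, i ∈ W → i ∈ Vr := by
      intro i hi
      rw [hW, Finset.mem_image] at hi
      obtain ⟨u, _, hu⟩ := hi
      rw [← hu]
      exact u.2
    -- for every j ∉ S k : full row sum and no mass from outside Vr
    have hkey : ∀ j : {x // x ∈ Vr}, j ∉ S k →
        (∀ u, 0 < P j u → u ∉ S k) ∧ (∀ i, i ∉ Vr → A i ↑j = 0) := by
      intro j hj
      have hj1 : j ∉ S (k+1) := fun h => hj (hSeq j h)
      have e1 : rs (k+1) j = 1 := hSnotmem (k+1) j hj1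
      rw [hrec] at e1
      have hterm : ∀ u, P j u * rs k u ≤ P j u := by
        intro u
        calc P j u * rs k u ≤ P j u * 1 :=
              mul_le_mul_of_nonneg_left (hrs_le1 k u) (hP j u)
          _ = P j u := mul_one _
      have hrow1 : ∑ u, P j u = 1 := by
        have h1 : (1:ℝ) ≤ ∑ u, P j u := by
          rw [← e1]
          exact Finset.sum_le_sum fun u _ => hterm u
        linarith [hrow_le j]
      have hzero : ∀ u, P j u * (1 - rs k u) = 0 := by
        have hsum0 : ∑ u, P j u * (1 - rs k u) = 0 := by
          have : ∑ u, P j u * (1 - rs k u) = (∑ u, P j u) - ∑ u, P j u * rs k u := by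
            rw [← Finset.sum_sub_distrib]
            apply Finset.sum_congr rfl
            intro u _
            ring
          rw [this, hrow1, e1, sub_self]
        intro u
        have := (Finset.sum_eq_zero_iff_of_nonneg (fun u (_ : u ∈ Finset.univ) =>
          mul_nonneg (hP j u) (by linarith [hrs_le1 k u]))).1 hsum0 u (Finset.mem_univ u)
        exact this
      constructor
      · intro u hu hmem
        rw [hSmem] at hmem
        have := hzero u
        nlinarith
      · intro i hi
        have hcomp0 : ∑ i ∈ Vrᶜ, A i ↑j = 0 := by
          have := hrowsum j
          rw [hrow1] at this
          field_simp at this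
          linarith
        have := (Finset.sum_eq_zero_iff_of_nonneg (fun i (_ : i ∈ Vrᶜ) => hA i ↑j)).1
          hcomp0 i (Finset.mem_compl.2 hi)
        exact this
    -- W is closed under in-edges of A
    have hcl : ∀ i j', j' ∈ W → 0 < A i j' → i ∈ W := by
      intro i j' hj' hAij
      rw [hW, Finset.mem_image] at hj'
      obtain ⟨j, hjmem, hjval⟩ := hj'
      rw [Finset.mem_sdiff] at hjmem
      have hjS : j ∉ S k := hjmem.2
      obtain ⟨hP0, hout⟩ := hkey j hjS
      subst hjval
      by_cases hiVr : i ∈ Vr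
      · set u : {x // x ∈ Vr} := ⟨i, hiVr⟩ with hu
        have hune : u ≠ j := by
          intro h
          have hij : i = (↑j : Fin c) := congrArg Subtype.val h
          rw [hij, hAdiag] at hAij
          exact lt_irrefl 0 hAij
        have hPju : 0 < P j u := by
          rw [hPdef]
          have hne' : j ≠ u := fun h => hune h.symm
          simp only [hne', if_false, zero_add]
          exact div_pos hAij hs0
        have := hP0 u hPju
        rw [hW, Finset.mem_image]
        exact ⟨u, Finset.mem_sdiff.2 ⟨Finset.mem_univ u, this⟩, rfl⟩
      · exact absurd (hout i hiVr) (ne_of_gt hAij)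
    -- contradiction with irreducibility
    have hj0W : (↑j0 : Fin c) ∈ W := by
      rw [hW, Finset.mem_image]
      exact ⟨j0, Finset.mem_sdiff.2 ⟨Finset.mem_univ j0, hj0⟩, rfl⟩
    have hioutW : iout ∉ W := fun h => hiout (hWVr iout h)
    have hne' : iout ≠ ↑j0 := by
      intro h
      rw [h] at hiout
      exact hiout j0.2
    obtain ⟨n, hn1, hn⟩ := hirr iout ↑j0 hne'
    obtain ⟨n', rfl⟩ := Nat.exists_eq_add_of_le hn1
    have := aux_closed A hA W hcl n' iout ↑j0 hj0W hioutW
    rw [Nat.add_comm 1 n'] at hn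
    rw [this] at hn
    exact lt_irrefl 0 hn
  -- S eventually covers everything
  set m : ℕ := Fintype.card {x // x ∈ Vr} with hmdef
  have hcard : ∀ k, S k = Finset.univ ∨ k ≤ (S k).card := by
    intro k
    induction k with
    | zero => right; exact Nat.zero_le _
    | succ k ih =>
      by_cases h : S k = Finset.univ
      · left
        apply Finset.eq_univ_of_forall
        intro j
        exact hSmono k (k+1) (Nat.le_succ k) (h ▸ Finset.mem_univ j)
      · rcases ih with h' | h'
        · exact absurd h' h
        · right
          have := Finset.card_lt_card (hgrow k h)
          omega
  have hSm : S m = Finset.univ := by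
    rcases hcard m with h | h
    · exact h
    · apply Finset.eq_univ_of_card
      have h2 : (S m).card ≤ m := by
        rw [hmdef]
        exact Finset.card_le_univ (S m)
      omega
  have hm : ∀ j, ∑ u, (P ^ m) j u < 1 := by
    intro j
    have : j ∈ S m := hSm ▸ Finset.mem_univ j
    rw [hSmem] at this
    exact this
  -- apply the key abstract lemma
  obtain ⟨hdet1, hinv1⟩ := aux_key P hP m hm
  -- transfer to M
  have hMT : Mᵀ = s • (1 - P) := by
    funext j u
    rw [Matrix.transpose_apply, Matrix.smul_apply, smul_eq_mul]
    exact hMP u j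
  have hMdet : IsUnit M.det := by
    have h1 : M.det = (Mᵀ).det := (Matrix.det_transpose M).symm
    rw [h1, hMT, Matrix.det_smul]
    exact IsUnit.mul (IsUnit.pow _ (isUnit_iff_ne_zero.2 hsne)) hdet1
  have hMinv : M⁻¹ = s⁻¹ • ((1 - P)⁻¹)ᵀ := by
    apply Matrix.inv_eq_right_inv
    have hMeq : M = s • (1 - P)ᵀ := by
      have := congrArg Matrix.transpose hMT
      rwa [Matrix.transpose_transpose, Matrix.transpose_smul] at this
    rw [hMeq, Matrix.transpose_nonsing_inv]
    rw [Matrix.smul_mul, Matrix.mul_smul, smul_smul, mul_inv_cancel₀ hsne]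
    rw [Matrix.mul_nonsing_inv]
    · exact one_smul _ _
    · rw [Matrix.det_transpose]
      exact hdet1
  refine ⟨hMdet, ?_⟩
  intro i j
  rw [hMinv]
  rw [Matrix.smul_apply, Matrix.transpose_apply, smul_eq_mul]
  exact mul_nonneg (inv_nonneg.2 (le_of_lt hs0)) (hinv1 j i)
end

section
/- Let L ∈ ℝ^{c×c} be partitioned as L = [[L11, L12],[L21, L22]] with L11 ∈ ℝ^{ĉ×ĉ}, 0 < ĉ < c, and L22 invertible; let P := [I_ĉ, −L12 L22⁻¹] and L̂ := L11 − L12 L22⁻¹ L21. Let Z = [Z1, Z2] ∈ ℝ^{m×c} be partitioned compatibly (Z1 ∈ ℝ^{m×ĉ}), set Ẑ := Z1, and let x ∈ ℝ^m have all entries strictly positive and v_b ∈ ℝ^c. Then Ẑ ( P v_b − L̂ · Exp(Ẑ^T Ln(x)) ) = Ẑ P ( v_b − L · Exp(Z^T Ln(x)) ). -/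
open scoped Matrix

/-!
With `P = [1, -L₁₂ L₂₂⁻¹]` one has `P L = [L̂, 0]` (the Schur complement identity), so `P` kills
the contribution of the deleted complexes to `L Exp(Zᵀ Ln x)`; what remains is `L̂` applied to the
first block `Exp(Z₁ᵀ Ln x)` of `Exp(Zᵀ Ln x)`.
-/

namespace Matrix

theorem fromCols_transpose_mulVec {R : Type*} [Semiring R] {m n₁ n₂ : Type*} [Fintype m]
    (A₁ : Matrix m n₁ R) (A₂ : Matrix m n₂ R) (u : m → R) :
    (fromCols A₁ A₂)ᵀ *ᵥ u = Sum.elim (A₁ᵀ *ᵥ u) (A₂ᵀ *ᵥ u) := by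
  rw [transpose_fromCols, fromRows_mulVec]

variable {R : Type*} [CommRing R] {m n : Type*} [Fintype m] [Fintype n] [DecidableEq m]
  [DecidableEq n]

theorem fromCols_one_neg_mul_fromBlocks (A : Matrix m m R) (B : Matrix m n R)
    (C : Matrix n m R) (D : Matrix n n R) (hD : IsUnit D.det) :
    fromCols (1 : Matrix m m R) (-(B * D⁻¹)) * fromBlocks A B C D =
      fromCols (A - B * D⁻¹ * C) 0 := by
  rw [fromCols_mul_fromBlocks, Matrix.neg_mul, Matrix.neg_mul,
    nonsing_inv_mul_cancel_right _ _ hD]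
  simp only [Matrix.one_mul, ← sub_eq_add_neg, sub_self, Matrix.mul_assoc]

theorem fromCols_one_neg_mulVec_sub_fromBlocks_mulVec (A : Matrix m m R) (B : Matrix m n R)
    (C : Matrix n m R) (D : Matrix n n R) (hD : IsUnit D.det) (v : m ⊕ n → R)
    (w₁ : m → R) (w₂ : n → R) :
    fromCols (1 : Matrix m m R) (-(B * D⁻¹)) *ᵥ (v - fromBlocks A B C D *ᵥ Sum.elim w₁ w₂) =
      fromCols (1 : Matrix m m R) (-(B * D⁻¹)) *ᵥ v - (A - B * D⁻¹ * C) *ᵥ w₁ := by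
  rw [mulVec_sub, mulVec_mulVec, fromCols_one_neg_mul_fromBlocks A B C D hD,
    fromCols_mulVec_sumElim, zero_mulVec, add_zero]

end Matrix

theorem reduced_dynamics_two_forms_general
    (m c_hat d : ℕ)
    (L11 : Matrix (Fin c_hat) (Fin c_hat) ℝ) (L12 : Matrix (Fin c_hat) (Fin d) ℝ)
    (L21 : Matrix (Fin d) (Fin c_hat) ℝ) (L22 : Matrix (Fin d) (Fin d) ℝ)
    (hL22 : IsUnit L22.det)
    (Z1 : Matrix (Fin m) (Fin c_hat) ℝ) (Z2 : Matrix (Fin m) (Fin d) ℝ)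
    (x : Fin m → ℝ)
    (v_b : Fin c_hat ⊕ Fin d → ℝ) :
    Z1.mulVec
        ((Matrix.fromCols (1 : Matrix (Fin c_hat) (Fin c_hat) ℝ)
            (-(L12 * L22⁻¹))).mulVec v_b -
          (L11 - L12 * L22⁻¹ * L21).mulVec
            (fun j => Real.exp ((Z1ᵀ).mulVec (fun i => Real.log (x i)) j))) =
      (Z1 * Matrix.fromCols (1 : Matrix (Fin c_hat) (Fin c_hat) ℝ)
          (-(L12 * L22⁻¹))).mulVec
        (v_b - (Matrix.fromBlocks L11 L12 L21 L22).mulVec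
          (fun j => Real.exp (((Matrix.fromCols Z1 Z2)ᵀ).mulVec
            (fun i => Real.log (x i)) j))) := by
  set u : Fin m → ℝ := fun i => Real.log (x i)
  have exp_split : (fun j => Real.exp (((Matrix.fromCols Z1 Z2)ᵀ *ᵥ u) j)) =
      Sum.elim (fun j => Real.exp ((Z1ᵀ *ᵥ u) j)) (fun j => Real.exp ((Z2ᵀ *ᵥ u) j)) := by
    rw [Matrix.fromCols_transpose_mulVec]
    ext (j | j) <;> rfl
  rw [exp_split, ← Matrix.mulVec_mulVec,
    Matrix.fromCols_one_neg_mulVec_sub_fromBlocks_mulVec _ _ _ _ hL22]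

/-- Equality of the two expressions for the reduced network dynamics in
equation (6) of the paper:
`Ẑ (P v_b - L̂ Exp(Ẑᵀ Ln x)) = Ẑ P (v_b - L Exp(Zᵀ Ln x))`. -/
theorem reduced_dynamics_two_forms
    (m c_hat d : ℕ) (hm : 0 < m) (hchat : 0 < c_hat) (hd : 0 < d)
    (L11 : Matrix (Fin c_hat) (Fin c_hat) ℝ) (L12 : Matrix (Fin c_hat) (Fin d) ℝ)
    (L21 : Matrix (Fin d) (Fin c_hat) ℝ) (L22 : Matrix (Fin d) (Fin d) ℝ)
    (hL22 : IsUnit L22.det)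
    (Z1 : Matrix (Fin m) (Fin c_hat) ℝ) (Z2 : Matrix (Fin m) (Fin d) ℝ)
    (x : Fin m → ℝ) (hx : ∀ i, 0 < x i)
    (v_b : Fin c_hat ⊕ Fin d → ℝ) :
    Z1.mulVec
        ((Matrix.fromCols (1 : Matrix (Fin c_hat) (Fin c_hat) ℝ)
            (-(L12 * L22⁻¹))).mulVec v_b -
          (L11 - L12 * L22⁻¹ * L21).mulVec
            (fun j => Real.exp ((Z1ᵀ).mulVec (fun i => Real.log (x i)) j))) =
      (Z1 * Matrix.fromCols (1 : Matrix (Fin c_hat) (Fin c_hat) ℝ)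
          (-(L12 * L22⁻¹))).mulVec
        (v_b - (Matrix.fromBlocks L11 L12 L21 L22).mulVec
          (fun j => Real.exp (((Matrix.fromCols Z1 Z2)ᵀ).mulVec
            (fun i => Real.log (x i)) j))) :=
  reduced_dynamics_two_forms_general m c_hat d L11 L12 L21 L22 hL22 Z1 Z2 x v_b
end
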